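/- Let k be a field of characteristic 0, X a finite type, and L = FreeLieAlgebra k X, with degree components L_n defined by L₁ = span of the generators and L_{n+1} = [L₁, L_n] (the span of brackets). Let r be a homogeneous Lie ideal of L (i.e., r is spanned by ⋃_n (r ∩ L_n)) with r ∩ L₁ = 0, and set g = L/r and ḡ = L/⟨r ∩ L₂⟩, where ⟨r ∩ L₂⟩ is the Lie ideal generated by r ∩ L₂. Let ι : L → T(V) be the canonical Lie morphism into the tensor algebra T(V) = FreeAlgebra k X (V the span of the generators), let J be the two-sided ideal of T(V) generated by ι(r), and let J₂ = J ∩ (V⊗V). Then there is a k-algebra isomorphism T(V)/⟨J₂⟩ ≅ U(ḡ); that is, the quadratic closure of the universal enveloping algebra U(g) = T(V)/J is the universal enveloping algebra of the quadratic Lie algebra ḡ. -/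

import Mathlib

noncomputable section

variable (k : Type*) [Field k] [CharZero k] (X : Type*)

/-- The degree-one component `L₁` of the free Lie algebra: the span of the generators. -/
def freeLieDegOne : Submodule k (FreeLieAlgebra k X) :=
  Submodule.span k (Set.range (FreeLieAlgebra.of k : X → FreeLieAlgebra k X))

/-- The degree components of the free Lie algebra: `freeLieDeg k X n` is `L_{n+1}`,
where `L₁` is the span of the generators and `L_{n+1} = [L₁, L_n]` (the span of
brackets). -/
def freeLieDeg : ℕ → Submodule k (FreeLieAlgebra k X)
  | 0 => freeLieDegOne k X
  | n + 1 => Submodule.span k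
      {z | ∃ x ∈ freeLieDegOne k X, ∃ y ∈ freeLieDeg n, z = ⁅x, y⁆}

attribute [local instance] LieRing.ofAssociativeRing

/-- The canonical Lie algebra morphism `ι` from the free Lie algebra on `X` into the
free associative algebra `T(V) = FreeAlgebra k X` (the tensor algebra on the free
module `V` spanned by the generators), sending generators to generators. -/
def freeLieToFreeAlgebra : FreeLieAlgebra k X →ₗ⁅k⁆ FreeAlgebra k X :=
  FreeLieAlgebra.lift k (FreeAlgebra.ι k)

/-- The two-sided ideal `J` of `T(V) = FreeAlgebra k X` generated by `ι(r)`, as a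
`k`-subspace: the span of all products `a * ι s * b` with `s ∈ r`. -/
def twoSidedSpan (r : LieIdeal k (FreeLieAlgebra k X)) :
    Submodule k (FreeAlgebra k X) :=
  Submodule.span k
    {z | ∃ a b : FreeAlgebra k X, ∃ s ∈ r, z = a * freeLieToFreeAlgebra k X s * b}

/-- The degree-two part `V ⊗ V` of `T(V) = FreeAlgebra k X`: the span of products of
two generators. -/
def freeAlgebraDegTwo : Submodule k (FreeAlgebra k X) :=
  Submodule.span k {z | ∃ x y : X, z = FreeAlgebra.ι k x * FreeAlgebra.ι k y}

/-!
Grade `T(V)` by word length, with degree-`n` part `Vⁿ`. Since `ι` maps `L_n` into `Vⁿ` and `r` is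
homogeneous, `J` is spanned by products `a * ι s * b` with `a ∈ Vⁱ`, `s ∈ r ∩ L_n`, `b ∈ Vʲ`, which are
homogeneous of degree `i + n + j`. As `r ∩ L₁ = 0`, the only such products of degree two are scalar
multiples of `ι s` with `s ∈ r ∩ L₂`; projecting onto degree two gives `J₂ = ι(r ∩ L₂)`. Finally,
`T(V)/⟨ι(r ∩ L₂)⟩` and `U(L/⟨r ∩ L₂⟩)` have the same universal property, because `T(V) = U(L)`.
-/

namespace FreeAlgebra

variable (R : Type*) [CommSemiring R] (Y : Type*)

def generatorSpan : Submodule R (FreeAlgebra R Y) :=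
  Submodule.span R (Set.range (ι R))

theorem ι_mem_generatorSpan (y : Y) : ι R y ∈ generatorSpan R Y :=
  Submodule.subset_span ⟨y, rfl⟩

def toGradedGeneratorSpanPow :
    FreeAlgebra R Y →ₐ[R] DirectSum ℕ fun i => ↥(generatorSpan R Y ^ i) :=
  lift R fun y => DirectSum.of (fun i => ↥(generatorSpan R Y ^ i)) 1
    ⟨ι R y, by simpa only [pow_one] using ι_mem_generatorSpan R Y y⟩

theorem toGradedGeneratorSpanPow_of_mem {m : FreeAlgebra R Y} (hm : m ∈ generatorSpan R Y) :
    toGradedGeneratorSpanPow R Y m =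
      DirectSum.of (fun i => ↥(generatorSpan R Y ^ i)) 1 ⟨m, by simpa only [pow_one]⟩ := by
  induction hm using Submodule.span_induction with
  | mem m hm => obtain ⟨y, rfl⟩ := hm; exact lift_ι_apply _ _
  | zero => rw [map_zero]; exact (map_zero _).symm
  | add m m' _ _ h h' => rw [map_add, h, h', ← map_add]; rfl
  | smul c m _ h =>
    rw [map_smul, h, ← DirectSum.lof_eq_of R, ← DirectSum.lof_eq_of R, ← map_smul]; rfl

instance gradedAlgebraGeneratorSpanPow :
    GradedAlgebra (generatorSpan R Y ^ · : ℕ → Submodule R (FreeAlgebra R Y)) :=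
  GradedAlgebra.ofAlgHom _ (toGradedGeneratorSpanPow R Y)
    (by ext y; simp [toGradedGeneratorSpanPow])
    fun i x => by
      obtain ⟨x, hx⟩ := x
      induction hx using Submodule.pow_induction_on_left' with
      | algebraMap r => rw [AlgHom.commutes, DirectSum.algebraMap_apply]; rfl
      | add x y i hx hy ihx ihy => rw [map_add, ihx, ihy, ← map_add]; rfl
      | mem_mul m hm i x hx ih =>
        rw [map_mul, ih, toGradedGeneratorSpanPow_of_mem R Y hm, DirectSum.of_mul_of]
        exact DirectSum.of_eq_of_gradedMonoid_eq (Sigma.subtype_ext (add_comm _ _) rfl)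

theorem generatorSpan_pow_two :
    generatorSpan R Y ^ 2 = Submodule.span R {z | ∃ x y : Y, z = ι R x * ι R y} := by
  rw [pow_two, generatorSpan, Submodule.span_mul_span]
  congr 1
  ext z
  simp [Set.mem_mul, eq_comm]

end FreeAlgebra

namespace LieIdeal

variable {R L L' : Type*} [CommRing R] [LieRing L] [LieAlgebra R L] [LieRing L'] [LieAlgebra R L']
  (I : LieIdeal R L)

def quotientMk : L →ₗ⁅R⁆ L ⧸ I :=
  { (I : Submodule R L).mkQ with map_lie' := fun {x y} => LieSubmodule.Quotient.mk_bracket I x y }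

theorem quotientMk_surjective : Function.Surjective (quotientMk I) :=
  Submodule.mkQ_surjective (I : Submodule R L)

theorem quotientMk_eq_zero {x : L} : quotientMk I x = 0 ↔ x ∈ I :=
  Submodule.Quotient.mk_eq_zero (I : Submodule R L)

def quotientLift (f : L →ₗ⁅R⁆ L') (hf : I ≤ f.ker) : L ⧸ I →ₗ⁅R⁆ L' :=
  { (I : Submodule R L).liftQ f.toLinearMap fun x hx => LieHom.mem_ker.1 (hf hx) with
    map_lie' := by rintro ⟨x⟩ ⟨y⟩; exact f.map_lie x y }

@[simp]
theorem quotientLift_quotientMk (f : L →ₗ⁅R⁆ L') (hf : I ≤ f.ker) (x : L) :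
    quotientLift I f hf (quotientMk I x) = f x :=
  rfl

end LieIdeal

namespace FreeLieAlgebra

variable {R Y : Type*} [CommRing R] (S : Submodule R (FreeLieAlgebra R Y))

def ringQuotEquivUniversalEnvelopingAlgebra :
    RingQuot (fun a b : FreeAlgebra R Y =>
        a ∈ S.map (lift R (FreeAlgebra.ι R)).toLinearMap ∧ b = 0) ≃ₐ[R]
      UniversalEnvelopingAlgebra R
        (FreeLieAlgebra R Y ⧸ LieSubmodule.lieSpan R (FreeLieAlgebra R Y) (S : Set _)) := by
  set I := LieSubmodule.lieSpan R (FreeLieAlgebra R Y) (S : Set (FreeLieAlgebra R Y))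
  set rel := fun a b : FreeAlgebra R Y => a ∈ S.map (lift R (FreeAlgebra.ι R)).toLinearMap ∧ b = 0
  let toU : FreeAlgebra R Y →ₐ[R] UniversalEnvelopingAlgebra R (FreeLieAlgebra R Y ⧸ I) :=
    FreeAlgebra.lift R (UniversalEnvelopingAlgebra.ι R ∘ LieIdeal.quotientMk I ∘ of R)
  have toU_lift (s : FreeLieAlgebra R Y) :
      toU (lift R (FreeAlgebra.ι R) s) = UniversalEnvelopingAlgebra.ι R (LieIdeal.quotientMk I s) :=
    LieHom.congr_fun (f := toU.toLieHom.comp (lift R (FreeAlgebra.ι R)))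
      (g := (UniversalEnvelopingAlgebra.ι R).comp (LieIdeal.quotientMk I)) (by ext; simp [toU]) s
  let F : RingQuot rel →ₐ[R] _ := RingQuot.liftAlgHom R ⟨toU, by
    rintro _ b ⟨⟨s, hs, rfl⟩, rfl⟩
    rw [map_zero, LieHom.coe_toLinearMap, toU_lift,
      (LieIdeal.quotientMk_eq_zero I).2 (LieSubmodule.subset_lieSpan hs), map_zero]⟩
  let G := UniversalEnvelopingAlgebra.lift R (LieIdeal.quotientLift I
    ((RingQuot.mkAlgHom R rel).toLieHom.comp (lift R (FreeAlgebra.ι R))) (by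
      rw [LieSubmodule.lieSpan_le]
      intro s hs
      exact (RingQuot.mkAlgHom_rel R ⟨⟨s, hs, rfl⟩, rfl⟩).trans (map_zero _)))
  exact AlgEquiv.ofAlgHom F G (by
      ext x
      obtain ⟨s, rfl⟩ := LieIdeal.quotientMk_surjective I x
      simpa [F, G] using toU_lift s)
    (by ext; simp [F, G, toU])

end FreeLieAlgebra

section DegreeTwo

open FreeAlgebra

variable {K : Type*} [Field K] {Z : Type*}

theorem map_freeLieDegOne :
    (freeLieDegOne K Z).map (freeLieToFreeAlgebra K Z).toLinearMap = generatorSpan K Z := by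
  rw [freeLieDegOne, Submodule.map_span, ← Set.range_comp, generatorSpan]
  congr 2
  ext x
  simp [freeLieToFreeAlgebra]

theorem map_freeLieDeg_le_generatorSpan_pow (n : ℕ) :
    (freeLieDeg K Z n).map (freeLieToFreeAlgebra K Z).toLinearMap ≤
      generatorSpan K Z ^ (n + 1) := by
  induction n with
  | zero => rw [zero_add, pow_one, freeLieDeg, map_freeLieDegOne]
  | succ n ih =>
    rw [freeLieDeg, Submodule.map_span, Submodule.span_le]
    rintro _ ⟨_, ⟨x, hx, y, hy, rfl⟩, rfl⟩
    have hx' : freeLieToFreeAlgebra K Z x ∈ generatorSpan K Z :=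
      map_freeLieDegOne (K := K) ▸ Submodule.mem_map_of_mem hx
    have hy' := ih (Submodule.mem_map_of_mem hy)
    simp only [LieHom.coe_toLinearMap, LieHom.map_lie, Ring.lie_def, SetLike.mem_coe]
    exact Submodule.sub_mem _
      (pow_succ' (generatorSpan K Z) (n + 1) ▸ Submodule.mul_mem_mul hx' hy')
      (pow_succ (generatorSpan K Z) (n + 1) ▸ Submodule.mul_mem_mul hy' hx')

variable (r : LieIdeal K (FreeLieAlgebra K Z))

theorem twoSidedSpan_le_top_mul_map_mul_top :
    twoSidedSpan K Z r ≤
      ⊤ * (r : Submodule K (FreeLieAlgebra K Z)).map (freeLieToFreeAlgebra K Z).toLinearMap * ⊤ :=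
  Submodule.span_le.2 <| by
    rintro _ ⟨a, b, s, hs, rfl⟩
    exact Submodule.mul_mem_mul (Submodule.mul_mem_mul trivial ⟨s, hs, rfl⟩) trivial

theorem map_inf_freeLieDeg_one_le :
    ((r : Submodule K (FreeLieAlgebra K Z)) ⊓ freeLieDeg K Z 1).map
        (freeLieToFreeAlgebra K Z).toLinearMap ≤
      twoSidedSpan K Z r ⊓ freeAlgebraDegTwo K Z := by
  rintro _ ⟨s, ⟨hsr, hs⟩, rfl⟩
  refine ⟨Submodule.subset_span ⟨1, 1, s, hsr, by simp⟩, ?_⟩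
  rw [freeAlgebraDegTwo, ← generatorSpan_pow_two]
  exact map_freeLieDeg_le_generatorSpan_pow 1 (Submodule.mem_map_of_mem hs)

theorem mul_map_inf_freeLieDeg_mul_le_comap_proj_two {ρ : Submodule K (FreeLieAlgebra K Z)}
    (hρ : ρ ⊓ freeLieDeg K Z 0 = ⊥) (i n j : ℕ) :
    generatorSpan K Z ^ i * (ρ ⊓ freeLieDeg K Z n).map (freeLieToFreeAlgebra K Z).toLinearMap *
        generatorSpan K Z ^ j ≤
      ((ρ ⊓ freeLieDeg K Z 1).map (freeLieToFreeAlgebra K Z).toLinearMap).comap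
        (GradedAlgebra.proj (generatorSpan K Z ^ · : ℕ → Submodule K (FreeAlgebra K Z)) 2) := by
  obtain rfl | ⟨rfl, rfl, rfl⟩ | hdeg : n = 0 ∨ (i = 0 ∧ n = 1 ∧ j = 0) ∨ i + (n + 1) + j ≠ 2 := by
    omega
  · simp [hρ]
  · intro z hz
    simp only [pow_zero, mul_one, one_mul] at hz
    have hz2 := map_freeLieDeg_le_generatorSpan_pow 1 (Submodule.map_mono inf_le_right hz)
    rwa [Submodule.mem_comap, GradedAlgebra.proj_apply, DirectSum.decompose_of_mem_same _ hz2]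
  · intro z hz
    have hzdeg : z ∈ generatorSpan K Z ^ (i + (n + 1) + j) := by
      rw [pow_add, pow_add]
      exact mul_le_mul' (mul_le_mul' le_rfl
        ((Submodule.map_mono inf_le_right).trans (map_freeLieDeg_le_generatorSpan_pow n))) le_rfl hz
    rw [Submodule.mem_comap, GradedAlgebra.proj_apply, DirectSum.decompose_of_mem_ne _ hzdeg hdeg]
    exact Submodule.zero_mem _

theorem twoSidedSpan_inf_freeAlgebraDegTwo
    (hhom : (r : Submodule K (FreeLieAlgebra K Z)) =
      ⨆ n : ℕ, ((r : Submodule K (FreeLieAlgebra K Z)) ⊓ freeLieDeg K Z n))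
    (hdeg1 : (r : Submodule K (FreeLieAlgebra K Z)) ⊓ freeLieDeg K Z 0 = ⊥) :
    twoSidedSpan K Z r ⊓ freeAlgebraDegTwo K Z =
      ((r : Submodule K (FreeLieAlgebra K Z)) ⊓ freeLieDeg K Z 1).map
        (freeLieToFreeAlgebra K Z).toLinearMap := by
  let 𝒜 : ℕ → Submodule K (FreeAlgebra K Z) := (generatorSpan K Z ^ ·)
  have htop : ⨆ i, 𝒜 i = ⊤ := (DirectSum.Decomposition.isInternal 𝒜).submodule_iSup_eq_top
  have hmap : (r : Submodule K (FreeLieAlgebra K Z)).map (freeLieToFreeAlgebra K Z).toLinearMap =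
      ⨆ n, ((r : Submodule K (FreeLieAlgebra K Z)) ⊓ freeLieDeg K Z n).map
        (freeLieToFreeAlgebra K Z).toLinearMap := by
    conv_lhs => rw [hhom]
    exact Submodule.map_iSup _ _
  have hJ : twoSidedSpan K Z r ≤ (((r : Submodule K (FreeLieAlgebra K Z)) ⊓ freeLieDeg K Z 1).map
      (freeLieToFreeAlgebra K Z).toLinearMap).comap (GradedAlgebra.proj 𝒜 2) := by
    refine (twoSidedSpan_le_top_mul_map_mul_top r).trans ?_
    rw [← htop, hmap]
    simp only [Submodule.iSup_mul, Submodule.mul_iSup, iSup_le_iff]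
    exact fun j n i => mul_map_inf_freeLieDeg_mul_le_comap_proj_two hdeg1 i n j
  refine le_antisymm (fun z ⟨hzJ, hz2⟩ => ?_) (map_inf_freeLieDeg_one_le r)
  rw [freeAlgebraDegTwo, ← generatorSpan_pow_two] at hz2
  simpa only [Submodule.mem_comap, GradedAlgebra.proj_apply,
    DirectSum.decompose_of_mem_same 𝒜 hz2] using hJ hzJ

end DegreeTwo

theorem stmt11 (r : LieIdeal k (FreeLieAlgebra k X))
    -- `r` is homogeneous: it is spanned by `⋃ n (r ∩ L_n)`:
    (hhom : (r : Submodule k (FreeLieAlgebra k X)) =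
      ⨆ n : ℕ, ((r : Submodule k (FreeLieAlgebra k X)) ⊓ freeLieDeg k X n))
    -- `r ∩ L₁ = 0`:
    (hdeg1 : (r : Submodule k (FreeLieAlgebra k X)) ⊓ freeLieDeg k X 0 = ⊥) :
    Nonempty
      (RingQuot (fun a b : FreeAlgebra k X =>
          a ∈ twoSidedSpan k X r ⊓ freeAlgebraDegTwo k X ∧ b = 0) ≃ₐ[k]
        UniversalEnvelopingAlgebra k
          (FreeLieAlgebra k X ⧸
            LieSubmodule.lieSpan k (FreeLieAlgebra k X)
              (((r : Submodule k (FreeLieAlgebra k X)) ⊓ freeLieDeg k X 1 :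
                  Submodule k (FreeLieAlgebra k X)) :
                Set (FreeLieAlgebra k X)))) := by
  rw [twoSidedSpan_inf_freeAlgebraDegTwo r hhom hdeg1]
  exact ⟨FreeLieAlgebra.ringQuotEquivUniversalEnvelopingAlgebra _⟩
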